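/- arXiv:2006.06221 — 4 statements merged into one kernel-verified Lean document; each statement's English description precedes it below -/
import Mathlib

section
/- Desnanot–Jacobi (Dodgson condensation) identity: for any n×n matrix A over a commutative ring with n ≥ 2, det(A) · det(A with first and last rows and first and last columns deleted) = det(A with first row and column deleted) · det(A with last row and column deleted) − det(A with first row, last column deleted) · det(A with last row, first column deleted). -/
open Matrix Fin

namespace DJ

variable {R : Type*} [CommRing R] {n : ℕ}

noncomputable def e (n : ℕ) : Fin 2 ⊕ Fin n ≃ Fin (n + 2) :=
  Equiv.ofBijective
    (Sum.elim (fun i : Fin 2 => if i = 0 then 0 else Fin.last (n+1))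
      (fun k : Fin n => k.succ.castSucc)) (by
    rw [Fintype.bijective_iff_injective_and_card]
    refine ⟨?_, by simp [add_comm]⟩
    rintro (i | i) (j | j) h <;>
      simp only [Sum.elim_inl, Sum.elim_inr] at h
    · fin_cases i <;> fin_cases j <;> simp_all [Fin.ext_iff]
    · exfalso; have := j.isLt
      fin_cases i <;> simp [Fin.ext_iff] at h <;> omega
    · exfalso; have := i.isLt
      fin_cases j <;> simp [Fin.ext_iff] at h <;> omega
    · simp only [Fin.ext_iff, Fin.coe_castSucc, Fin.val_succ] at h
      exact congrArg Sum.inr (Fin.ext (by omega)))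

@[simp] lemma e_inl_zero : e n (Sum.inl 0) = 0 := rfl
@[simp] lemma e_inl_one : e n (Sum.inl 1) = Fin.last (n+1) := rfl
@[simp] lemma e_inr (k : Fin n) : e n (Sum.inr k) = k.succ.castSucc := rfl

lemma key (A : Matrix (Fin (n + 2)) (Fin (n + 2)) R) :
    A.det * ((A.submatrix Fin.succ Fin.succ).det *
          (A.submatrix Fin.castSucc Fin.castSucc).det -
        (A.submatrix Fin.succ Fin.castSucc).det * (A.submatrix Fin.castSucc Fin.succ).det) =
      A.det * (A.det *
        (A.submatrix (fun k : Fin n => (k.succ.castSucc : Fin (n + 2)))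
          (fun k : Fin n => (k.succ.castSucc : Fin (n + 2)))).det) := by
  set l : Fin (n + 2) := Fin.last (n + 1) with hldef
  have hl0 : l ≠ 0 := by simp [hldef, Fin.ext_iff]
  have hm0 : ∀ k : Fin n, (k.succ.castSucc : Fin (n + 2)) ≠ 0 := fun k h =>
    Fin.succ_ne_zero k (Fin.castSucc_eq_zero_iff.mp h)
  have hml : ∀ k : Fin n, (k.succ.castSucc : Fin (n + 2)) ≠ l := fun k =>
    (Fin.castSucc_lt_last k.succ).ne
  set D : Matrix (Fin (n + 2)) (Fin (n + 2)) R :=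
    Matrix.of (fun i j => if j = 0 then adjugate A i 0 else if j = l then adjugate A i l
      else if i = j then 1 else 0) with hDdef
  -- determinant of D
  have hD : D.det = adjugate A 0 0 * adjugate A l l - adjugate A 0 l * adjugate A l 0 := by
    rw [← det_submatrix_equiv_self (e n) D]
    have hblocks : D.submatrix (e n) (e n) =
        Matrix.fromBlocks
          !![adjugate A 0 0, adjugate A 0 l; adjugate A l 0, adjugate A l l] 0
          (Matrix.of fun (k : Fin n) (i : Fin 2) =>
            if i = 0 then adjugate A k.succ.castSucc 0 else adjugate A k.succ.castSucc l) 1 := by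
      ext (i | i) (j | j)
      · fin_cases i <;> fin_cases j <;>
          simp [D, hl0, ← hldef, -Fin.castSucc_succ]
      · fin_cases i <;>
          simp [D, hm0 j, hml j, Ne.symm (hm0 j), Ne.symm (hml j), hl0, Fin.succ_ne_zero, ← hldef, -Fin.castSucc_succ]
      · fin_cases j <;> simp [D, hl0, ← hldef, -Fin.castSucc_succ]
      · simp [D, Matrix.one_apply, Ne.symm (hm0 j), Ne.symm (hml j), hm0 j, hml j,
          Fin.castSucc_inj, Fin.succ_inj, ← hldef, -Fin.castSucc_succ]
    rw [hblocks, Matrix.det_fromBlocks_zero₁₂, Matrix.det_one, mul_one, Matrix.det_fin_two_of]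
  -- determinant of A * D
  have hADc0 : ∀ i, (A * D) i 0 = A.det * (if i = 0 then 1 else 0) := by
    intro i
    have : (A * D) i 0 = (A * adjugate A) i 0 := by
      simp only [Matrix.mul_apply]
      refine Finset.sum_congr rfl fun k _ => ?_
      simp [D]
    rw [this, Matrix.mul_adjugate]
    simp [Matrix.one_apply]
  have hADcl : ∀ i, (A * D) i l = A.det * (if i = l then 1 else 0) := by
    intro i
    have : (A * D) i l = (A * adjugate A) i l := by
      simp only [Matrix.mul_apply]
      refine Finset.sum_congr rfl fun k _ => ?_
      simp [D, hl0]
    rw [this, Matrix.mul_adjugate]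
    simp [Matrix.one_apply]
  have hADm : ∀ i (m : Fin n), (A * D) i m.succ.castSucc = A i m.succ.castSucc := by
    intro i m
    simp only [Matrix.mul_apply, D, Matrix.of_apply, hm0 m, hml m, if_false,
      mul_ite, mul_one, mul_zero]
    simp
  have hAD : (A * D).det =
      A.det * (A.det * (A.submatrix (fun k : Fin n => (k.succ.castSucc : Fin (n + 2)))
        (fun k : Fin n => (k.succ.castSucc : Fin (n + 2)))).det) := by
    rw [← det_submatrix_equiv_self (e n) (A * D)]
    have hblocks : (A * D).submatrix (e n) (e n) =
        Matrix.fromBlocks (A.det • (1 : Matrix (Fin 2) (Fin 2) R))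
          (Matrix.of fun (i : Fin 2) (k : Fin n) =>
            A (if i = 0 then 0 else l) k.succ.castSucc) 0
          (A.submatrix (fun k : Fin n => (k.succ.castSucc : Fin (n + 2)))
            (fun k : Fin n => (k.succ.castSucc : Fin (n + 2)))) := by
      ext (i | i) (j | j)
      · fin_cases i <;> fin_cases j <;>
          simp [hADc0, hADcl, hl0, Ne.symm hl0, Matrix.one_apply, ← hldef, -Fin.castSucc_succ]
      · fin_cases i <;> simp [hADm, ← hldef, -Fin.castSucc_succ]
      · fin_cases j <;> simp [hADc0, hADcl, hm0 i, hml i, ← hldef, -Fin.castSucc_succ]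
      · simp [hADm, ← hldef, -Fin.castSucc_succ]
    rw [hblocks, Matrix.det_fromBlocks_zero₂₁, Matrix.det_smul, Matrix.det_one]
    simp [pow_two]
    ring
  have hmul : A.det * D.det = (A * D).det := (Matrix.det_mul A D).symm
  rw [hAD, hD] at hmul
  -- adjugate entries as corner minors
  have h00 : adjugate A (0 : Fin (n + 2)) 0 = (A.submatrix Fin.succ Fin.succ).det := by
    rw [Matrix.adjugate_fin_succ_eq_det_submatrix]
    simp
  have hll : adjugate A l l = (A.submatrix Fin.castSucc Fin.castSucc).det := by
    rw [Matrix.adjugate_fin_succ_eq_det_submatrix]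
    simp only [hldef, Fin.succAbove_last, Fin.val_last]
    rw [Even.neg_one_pow ⟨n + 1, rfl⟩, one_mul]
  have h0l : adjugate A (0 : Fin (n + 2)) l =
      (-1 : R) ^ (n + 1) * (A.submatrix Fin.castSucc Fin.succ).det := by
    rw [Matrix.adjugate_fin_succ_eq_det_submatrix]
    simp [hldef]
  have hl0' : adjugate A l (0 : Fin (n + 2)) =
      (-1 : R) ^ (n + 1) * (A.submatrix Fin.succ Fin.castSucc).det := by
    rw [Matrix.adjugate_fin_succ_eq_det_submatrix]
    simp [hldef]
  have hsq : ((-1 : R) ^ (n + 1)) * ((-1 : R) ^ (n + 1)) = 1 := by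
    rw [← pow_add]; exact Even.neg_one_pow ⟨n + 1, rfl⟩
  rw [h00, hll, h0l, hl0'] at hmul
  calc A.det * ((A.submatrix Fin.succ Fin.succ).det *
          (A.submatrix Fin.castSucc Fin.castSucc).det -
        (A.submatrix Fin.succ Fin.castSucc).det * (A.submatrix Fin.castSucc Fin.succ).det)
      = A.det * ((A.submatrix Fin.succ Fin.succ).det *
          (A.submatrix Fin.castSucc Fin.castSucc).det -
        ((-1 : R) ^ (n + 1) * (-1 : R) ^ (n + 1)) *
          ((A.submatrix Fin.succ Fin.castSucc).det *
            (A.submatrix Fin.castSucc Fin.succ).det)) := by rw [hsq, one_mul]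
    _ = A.det * (A.det * (A.submatrix (fun k : Fin n => (k.succ.castSucc : Fin (n + 2)))
          (fun k : Fin n => (k.succ.castSucc : Fin (n + 2)))).det) := by
        rw [← hmul]; ring

end DJ

/-- Desnanot–Jacobi (Dodgson condensation) identity for an `(n+2)×(n+2)` matrix:
`det A · det(A with first and last rows and columns deleted)
  = det(A with first row and column deleted) · det(A with last row and column deleted)
    − det(A with first row and last column deleted) · det(A with last row and first column deleted)`.
Row/column deletion is expressed via `submatrix`: `Fin.succ` skips the first index,
`Fin.castSucc` skips the last index, and `fun k => k.succ.castSucc` skips both. -/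
theorem desnanot_jacobi {R : Type*} [CommRing R] (n : ℕ)
    (A : Matrix (Fin (n + 2)) (Fin (n + 2)) R) :
    A.det *
        (A.submatrix (fun k : Fin n => (k.succ.castSucc : Fin (n + 2)))
          (fun k : Fin n => (k.succ.castSucc : Fin (n + 2)))).det =
      (A.submatrix Fin.succ Fin.succ).det * (A.submatrix Fin.castSucc Fin.castSucc).det -
        (A.submatrix Fin.succ Fin.castSucc).det * (A.submatrix Fin.castSucc Fin.succ).det := by
  classical
  set X : Matrix (Fin (n + 2)) (Fin (n + 2)) (MvPolynomial (Fin (n + 2) × Fin (n + 2)) ℤ) :=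
    Matrix.of fun i j => MvPolynomial.X (i, j) with hX
  have hdet : X.det ≠ 0 := by
    intro h
    have h1 := congrArg (MvPolynomial.eval
      (fun p : Fin (n + 2) × Fin (n + 2) => if p.1 = p.2 then (1 : ℤ) else 0)) h
    rw [RingHom.map_det, map_zero] at h1
    have h2 : (MvPolynomial.eval
        (fun p : Fin (n + 2) × Fin (n + 2) => if p.1 = p.2 then (1 : ℤ) else 0)).mapMatrix X
        = (1 : Matrix (Fin (n + 2)) (Fin (n + 2)) ℤ) := by
      ext i j
      simp [X, Matrix.one_apply]
    rw [h2, Matrix.det_one] at h1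
    exact one_ne_zero h1
  have hgen : X.det *
        (X.submatrix (fun k : Fin n => (k.succ.castSucc : Fin (n + 2)))
          (fun k : Fin n => (k.succ.castSucc : Fin (n + 2)))).det =
      (X.submatrix Fin.succ Fin.succ).det * (X.submatrix Fin.castSucc Fin.castSucc).det -
        (X.submatrix Fin.succ Fin.castSucc).det * (X.submatrix Fin.castSucc Fin.succ).det := by
    exact (mul_left_cancel₀ hdet (DJ.key X)).symm
  set φ : MvPolynomial (Fin (n + 2) × Fin (n + 2)) ℤ →+* R :=
    (MvPolynomial.eval₂Hom (Int.castRingHom R) (fun p => A p.1 p.2)) with hφ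
  have hA : φ.mapMatrix X = A := by
    ext i j
    simp [X, φ]
  have hsub : ∀ {m : ℕ} (r c : Fin m → Fin (n + 2)),
      φ ((X.submatrix r c).det) = ((φ.mapMatrix X).submatrix r c).det := by
    intro m r c
    rw [RingHom.map_det]
    rfl
  have := congrArg φ hgen
  rw [map_sub, _root_.map_mul, _root_.map_mul, _root_.map_mul, RingHom.map_det,
    hsub, hsub, hsub, hsub, hsub, hA]
    at this
  exact this
end

section
/- Pfaffian bilinear identity (lowest nontrivial case): for elements Pf(x,y) of a skew-symmetric array over a commutative ring indexed by {a₁,a₂,a₃,a₄,1,2}, one has Pf(a₁,a₂,a₃,a₄,1,2)·Pf(1,2) = Pf(a₁,a₂,1,2)·Pf(a₃,a₄,1,2) − Pf(a₁,a₃,1,2)·Pf(a₂,a₄,1,2) + Pf(a₁,a₄,1,2)·Pf(a₂,a₃,1,2), where each Pfaffian is given by its standard expansion in the pair entries. -/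
/-- Pfaffian bilinear identity (lowest nontrivial even case).  Indices: `0,1,2,3`
play the roles of `a₁,a₂,a₃,a₄` and `4,5` the roles of `1,2`.  With
`Pf(i,j) = p i j`, `Pf(i,j,k,l) = p i j · p k l − p i k · p j l + p i l · p j k`,
and the 6-index Pfaffian defined by Laplace expansion along the first index,
one has `Pf(a₁,a₂,a₃,a₄,1,2)·Pf(1,2) = Pf(a₁,a₂,1,2)·Pf(a₃,a₄,1,2)
  − Pf(a₁,a₃,1,2)·Pf(a₂,a₄,1,2) + Pf(a₁,a₄,1,2)·Pf(a₂,a₃,1,2)`. -/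
theorem pfaffian_bilinear_even {R : Type*} [CommRing R]
    (p : Fin 6 → Fin 6 → R) (hp : ∀ i j, p i j = - p j i) :
    (let pf4 : Fin 6 → Fin 6 → Fin 6 → Fin 6 → R := fun i j k l =>
      p i j * p k l - p i k * p j l + p i l * p j k
     let pf6 : R :=
      p 0 1 * pf4 2 3 4 5 - p 0 2 * pf4 1 3 4 5 + p 0 3 * pf4 1 2 4 5
        - p 0 4 * pf4 1 2 3 5 + p 0 5 * pf4 1 2 3 4
     pf6 * p 4 5 =
      pf4 0 1 4 5 * pf4 2 3 4 5 - pf4 0 2 4 5 * pf4 1 3 4 5 + pf4 0 3 4 5 * pf4 1 2 4 5) := by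
  simp only []
  ring
end

section
/- Somos-7 from generalised Lotka–Volterra reduction: if τ : ℤ³ → R satisfies τ_{n+2}^{k,l}τ_{n−1}^{k+1,l+1} − τ_n^{k,l+1}τ_{n+1}^{k+1,l} = τ_n^{k+1,l+1}τ_{n+1}^{k,l} − τ_n^{k+1,l}τ_{n+1}^{k,l+1} for all n,k,l, and τ_n^{k,l} = τ̂_{n+3k+5l−1} for some sequence τ̂ : ℤ → R, then τ̂ satisfies the Somos-7 recurrence τ̂_{ℓ+7}τ̂_ℓ = τ̂_{ℓ+6}τ̂_{ℓ+1} + τ̂_{ℓ+5}τ̂_{ℓ+2} − τ̂_{ℓ+4}τ̂_{ℓ+3}. -/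
/-- Somos-7 from the generalised Lotka–Volterra reduction. -/
theorem somos7_of_glv {R : Type*} [CommRing R]
    (τ : ℤ → ℤ → ℤ → R) (t : ℤ → R)
    (H : ∀ n k l : ℤ,
      τ (n + 2) k l * τ (n - 1) (k + 1) (l + 1) - τ n k (l + 1) * τ (n + 1) (k + 1) l =
        τ n (k + 1) (l + 1) * τ (n + 1) k l - τ n (k + 1) l * τ (n + 1) k (l + 1))
    (hred : ∀ n k l : ℤ, τ n k l = t (n + 3 * k + 5 * l - 1)) :
    ∀ ℓ : ℤ, t (ℓ + 7) * t ℓ =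
      t (ℓ + 6) * t (ℓ + 1) + t (ℓ + 5) * t (ℓ + 2) - t (ℓ + 4) * t (ℓ + 3) := by
  intro ℓ
  have h := H ℓ 0 0
  simp only [hred] at h
  ring_nf at h ⊢
  linear_combination -h
end

section
/- Algebraic derivation of the discrete CKP (dCKP) equation: let A = τ_{N+1}^{m,l}, A' = τ_{N+1}^{m+1,l}, B = τ_N^{m,l}, B' = τ_N^{m+1,l}, C = τ_N^{m,l+1}, C' = τ_N^{m+1,l+1}, D = τ_{N−1}^{m,l+1}, D' = τ_{N−1}^{m+1,l+1}, σ = σ_N^{m,l}, σ' = σ_{N−1}^{m,l+1}, ξ = ξ_N^{m,l}, ξ' = ξ_{N−1}^{m,l} be ring elements, and assume BD' − B'D = ξ'², AC' − A'C = ξ², C'B − B'C = σσ' − ξξ', and A'D − AD' = σσ' + ξξ'. Then 4(AC' − A'C)(BD' − B'D) = (BC' + AD' − DA' − B'C)², that is, 4(τ_{N+1}^{m,l}τ_N^{m+1,l+1} − τ_{N+1}^{m+1,l}τ_N^{m,l+1})(τ_N^{m,l}τ_{N−1}^{m+1,l+1} − τ_N^{m+1,l}τ_{N−1}^{m,l+1})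 = (τ_N^{m,l}τ_N^{m+1,l+1} + τ_{N+1}^{m,l}τ_{N−1}^{m+1,l+1} − τ_{N−1}^{m,l+1}τ_{N+1}^{m+1,l} − τ_N^{m+1,l}τ_N^{m,l+1})². -/
/-- Algebraic derivation of the discrete CKP (dCKP) equation.  Symbols:
`A = τ_{N+1}^{m,l}`, `A' = τ_{N+1}^{m+1,l}`, `B = τ_N^{m,l}`, `B' = τ_N^{m+1,l}`,
`C = τ_N^{m,l+1}`, `C' = τ_N^{m+1,l+1}`, `D = τ_{N−1}^{m,l+1}`,
`D' = τ_{N−1}^{m+1,l+1}`, and `p = σ_N^{m,l}σ_{N−1}^{m,l+1}`. -/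
theorem dCKP_of_c_identities {R : Type*} [CommRing R]
    (A A' B B' C C' D D' x x' p : R)
    (h1 : A * C' - A' * C = x ^ 2)
    (h2 : B * D' - B' * D = x' ^ 2)
    (h3 : C' * B - B' * C = p - x * x')
    (h4 : A' * D - A * D' = p + x * x') :
    4 * (A * C' - A' * C) * (B * D' - B' * D) =
      (B * C' + A * D' - D * A' - B' * C) ^ 2 := by
  rw [h1, h2]
  have key : B * C' + A * D' - D * A' - B' * C = -(2 * (x * x')) := by
    linear_combination h3 - h4
  rw [key]; ring
end
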